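/- arXiv:1807.10940 — 2 statements merged into one kernel-verified Lean document; each statement's English description precedes it below -/
import Mathlib

section
/- For all integers n, k with 3 ≤ n and 2 ≤ k < n, the exponent p_n(k) = 2 + 8(2n-1)/(n(5n+2k-9) + k(k-3) + 4) is strictly smaller than Guth's exponent 2 + 4/(n+k-2). Equivalently, 2(2n-1)(n+k-2) < n(5n+2k-9) + k² - 3k + 4, and indeed the difference of the two sides equals (n-k)(n-k+1). -/
theorem pExp_lt_Guth (n k : ℤ) (hn : 3 ≤ n) (hk : 2 ≤ k) (hkn : k < n) :
    (2 + 8 * (2 * (n : ℚ) - 1) /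
        ((n : ℚ) * (5 * (n : ℚ) + 2 * (k : ℚ) - 9) + (k : ℚ) * ((k : ℚ) - 3) + 4)
      < 2 + 4 / ((n : ℚ) + (k : ℚ) - 2)) ∧
    2 * (2 * n - 1) * (n + k - 2) < n * (5 * n + 2 * k - 9) + k ^ 2 - 3 * k + 4 ∧
    n * (5 * n + 2 * k - 9) + k ^ 2 - 3 * k + 4 - 2 * (2 * n - 1) * (n + k - 2)
      = (n - k) * (n - k + 1) := by
  have hid : n * (5 * n + 2 * k - 9) + k ^ 2 - 3 * k + 4 - 2 * (2 * n - 1) * (n + k - 2)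
      = (n - k) * (n - k + 1) := by ring
  have hlt : 2 * (2 * n - 1) * (n + k - 2) < n * (5 * n + 2 * k - 9) + k ^ 2 - 3 * k + 4 := by
    nlinarith [mul_pos (by omega : (0:ℤ) < n - k) (by omega : (0:ℤ) < n - k + 1)]
  refine ⟨?_, hlt, hid⟩
  have hnq : (3:ℚ) ≤ n := by exact_mod_cast hn
  have hkq : (2:ℚ) ≤ k := by exact_mod_cast hk
  have hknq : (k:ℚ) < n := by exact_mod_cast hkn
  have hd1 : (0:ℚ) < (n : ℚ) * (5 * (n : ℚ) + 2 * (k : ℚ) - 9) + (k : ℚ) * ((k : ℚ) - 3) + 4 := by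
    nlinarith
  have hd2 : (0:ℚ) < (n : ℚ) + (k : ℚ) - 2 := by linarith
  rw [add_lt_add_iff_left, div_lt_div_iff₀ hd1 hd2]
  nlinarith [mul_pos (by linarith : (0:ℚ) < (n:ℚ) - k) (by linarith : (0:ℚ) < (n:ℚ) - k + 1)]
end

section
/- Let n, m be integers with 2 ≤ m < n and define γ_j := (n+m−1)(n+m−2)/((n+j)(n+j−1)(n+j−2)) for m+1 ≤ j ≤ n−1 and γ_m := 1/(n+m). Then these γ_j solve the linear system ∑_{j=m}^{i−1} (n − j + 2i − 2)·γ_j = i − m for every i with m+1 ≤ i ≤ n. -/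
/-!
Extended to every `j > m`, the formula for `γ j` telescopes: `γ j = F j - F (j + 1)` with
`F k = (n + m - 1)(n + m - 2) / (2 (n + k - 1)(n + k - 2))`, and `γ m + F (m + 1) = 1 / 2`,
so `∑_{m ≤ j < i} γ j = 1 / 2 - F i`. Passing from `i` to `i + 1` adds
`2 ∑_{m ≤ j < i} γ j + (n + i) γ i = (1 - 2 F i) + 2 F i = 1` to the left-hand side of the
system, which equals `(n + m) γ m = 1` at `i = m + 1`.
-/

open Finset

theorem Int.sum_Ico_eq_sub_of_eq_sub {M : Type*} [AddCommGroup M] {f s : ℤ → M} {a b : ℤ}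
    (hab : a ≤ b) (h : ∀ k, a ≤ k → k < b → f k = s k - s (k + 1)) :
    ∑ k ∈ Ico a b, f k = s a - s b := by
  induction b, hab using Int.leInduction with
  | base => simp
  | succ b hab ih =>
    rw [← sum_Ico_add_eq_sum_Ico_add_one hab, ih fun k hak hkb => h k hak (by omega),
      h b hab (by omega)]
    abel

theorem sum_Ico_sub_add_two_mul_succ (n : ℤ) (γ : ℤ → ℚ) {m i : ℤ} (hi : m ≤ i) :
    ∑ j ∈ Ico m (i + 1), ((n : ℚ) - j + 2 * ((i + 1 : ℤ) : ℚ) - 2) * γ j =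
      ∑ j ∈ Ico m i, ((n : ℚ) - j + 2 * i - 2) * γ j + 2 * ∑ j ∈ Ico m i, γ j +
        ((n : ℚ) + i) * γ i := by
  rw [← sum_Ico_add_eq_sum_Ico_add_one hi, mul_sum, ← sum_add_distrib]
  push_cast
  congr 1
  · exact sum_congr rfl fun j _ => by ring
  · ring

def gammaTerm (n m j : ℤ) : ℚ :=
  ((n : ℚ) + m - 1) * ((n : ℚ) + m - 2) / (((n : ℚ) + j) * ((n : ℚ) + j - 1) * ((n : ℚ) + j - 2))

/-- The tail `∑_{j ≥ k}` of the series `∑_{j > m} gammaTerm n m j`. -/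
def gammaTail (n m k : ℤ) : ℚ :=
  ((n : ℚ) + m - 1) * ((n : ℚ) + m - 2) / (2 * ((n : ℚ) + k - 1) * ((n : ℚ) + k - 2))

section

variable {n m : ℤ}

theorem gammaTerm_eq_gammaTail_sub {j : ℤ} (hj : 2 < n + j) :
    gammaTerm n m j = gammaTail n m j - gammaTail n m (j + 1) := by
  obtain ⟨h0, h1, h2⟩ : (n : ℚ) + j ≠ 0 ∧ (n : ℚ) + j - 1 ≠ 0 ∧ (n : ℚ) + j - 2 ≠ 0 := by
    refine ⟨?_, ?_, ?_⟩ <;> norm_cast <;> omega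
  unfold gammaTerm gammaTail
  rw [show (n : ℚ) + ((j + 1 : ℤ) : ℚ) - 1 = n + j by push_cast; ring,
    show (n : ℚ) + ((j + 1 : ℤ) : ℚ) - 2 = n + j - 1 by push_cast; ring]
  field_simp
  ring

theorem add_mul_gammaTerm {j : ℤ} (hj : 2 < n + j) :
    ((n : ℚ) + j) * gammaTerm n m j = 2 * gammaTail n m j := by
  obtain ⟨h0, h1, h2⟩ : (n : ℚ) + j ≠ 0 ∧ (n : ℚ) + j - 1 ≠ 0 ∧ (n : ℚ) + j - 2 ≠ 0 := by
    refine ⟨?_, ?_, ?_⟩ <;> norm_cast <;> omega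
  unfold gammaTerm gammaTail
  field_simp

theorem one_div_add_gammaTail_succ (hnm : 1 < n + m) :
    1 / ((n : ℚ) + m) + gammaTail n m (m + 1) = 1 / 2 := by
  obtain ⟨h0, h1⟩ : (n : ℚ) + m ≠ 0 ∧ (n : ℚ) + m - 1 ≠ 0 := by
    refine ⟨?_, ?_⟩ <;> norm_cast <;> omega
  unfold gammaTail
  rw [show (n : ℚ) + ((m + 1 : ℤ) : ℚ) - 1 = n + m by push_cast; ring,
    show (n : ℚ) + ((m + 1 : ℤ) : ℚ) - 2 = n + m - 1 by push_cast; ring]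
  field_simp
  ring

variable {γ : ℤ → ℚ}

theorem sum_Ico_gamma (hnm : 1 < n + m) (hγm : γ m = 1 / ((n : ℚ) + m))
    (hγ : ∀ j, m + 1 ≤ j → j ≤ n - 1 → γ j = gammaTerm n m j) {i : ℤ} (hi : m + 1 ≤ i)
    (hin : i ≤ n) :
    ∑ j ∈ Ico m i, γ j = 1 / 2 - gammaTail n m i := by
  have htail : ∑ j ∈ Ico (m + 1) i, γ j = gammaTail n m (m + 1) - gammaTail n m i := by
    refine Int.sum_Ico_eq_sub_of_eq_sub (s := gammaTail n m) hi fun j hj hji => ?_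
    rw [hγ j hj (by omega), gammaTerm_eq_gammaTail_sub (by omega)]
  rw [← insert_Ico_add_one_left_eq_Ico (by omega), sum_insert (by simp), htail, hγm,
    ← one_div_add_gammaTail_succ hnm]
  ring

theorem sum_Ico_weighted_gamma (hnm : 1 < n + m) (hγm : γ m = 1 / ((n : ℚ) + m))
    (hγ : ∀ j, m + 1 ≤ j → j ≤ n - 1 → γ j = gammaTerm n m j) {i : ℤ} (hi : m + 1 ≤ i)
    (hin : i ≤ n) :
    ∑ j ∈ Ico m i, ((n : ℚ) - j + 2 * i - 2) * γ j = i - m := by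
  induction i, hi using Int.leInduction with
  | base =>
    have h0 : (n : ℚ) + m ≠ 0 := by norm_cast; omega
    rw [Ico_add_one_right_eq_Icc, Icc_self, sum_singleton, hγm]
    push_cast
    field_simp
    ring
  | succ i hi ih =>
    rw [sum_Ico_sub_add_two_mul_succ n γ (by omega), ih (by omega),
      sum_Ico_gamma hnm hγm hγ hi (by omega), hγ i hi (by omega), add_mul_gammaTerm (by omega)]
    push_cast
    ring

end

theorem gamma_solves_linear_system_general (n m : ℤ) (hm : 2 ≤ m)
    (γ : ℤ → ℚ) (hγm : γ m = 1 / ((n : ℚ) + (m : ℚ)))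
    (hγ : ∀ j, m + 1 ≤ j → j ≤ n - 1 →
      γ j = ((n : ℚ) + m - 1) * ((n : ℚ) + m - 2) /
        (((n : ℚ) + j) * ((n : ℚ) + j - 1) * ((n : ℚ) + j - 2))) :
    ∀ i, m + 1 ≤ i → i ≤ n →
      ∑ j ∈ Finset.Icc m (i - 1), ((n : ℚ) - (j : ℚ) + 2 * (i : ℚ) - 2) * γ j =
        (i : ℚ) - (m : ℚ) := by
  intro i hi hin
  rw [Icc_sub_one_right_eq_Ico]
  exact sum_Ico_weighted_gamma (by omega) hγm hγ hi hin

theorem gamma_solves_linear_system (n m : ℤ) (hm : 2 ≤ m) (hmn : m < n)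
    (γ : ℤ → ℚ) (hγm : γ m = 1 / ((n : ℚ) + (m : ℚ)))
    (hγ : ∀ j, m + 1 ≤ j → j ≤ n - 1 →
      γ j = ((n : ℚ) + m - 1) * ((n : ℚ) + m - 2) /
        (((n : ℚ) + j) * ((n : ℚ) + j - 1) * ((n : ℚ) + j - 2))) :
    ∀ i, m + 1 ≤ i → i ≤ n →
      ∑ j ∈ Finset.Icc m (i - 1), ((n : ℚ) - (j : ℚ) + 2 * (i : ℚ) - 2) * γ j =
        (i : ℚ) - (m : ℚ) :=
  gamma_solves_linear_system_general n m hm γ hγm hγ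
end
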